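/- Suppose g has a left limit α at x (g(m) → α as m → x with m < x) and a right limit β at x (g(m) → β as m → x with m > x), and that g(x) lies in the closed interval [min(α,β), max(α,β)]. Then H(x) = [min(α,β), max(α,β)]. -/

import Mathlib

/-!
Near `x` the values of `g` lie within `ε` of `α` on the left, of `β` on the right, and at `x`
itself between them, so every `H`-set for a small radius sits in `[min α β - ε, max α β + ε]`.
Conversely, `α` and `β` are limits of values of `g` taken arbitrarily close to `x`, so they lie in
every set whose intersection is `H(x)`; these sets are convex, hence so is `H(x)`, and it contains
the segment `[α, β]`.
-/

open Filter

/-- The convexified set-valued map `H(x) = ⋂_{η>0} closure (convexHull (g '' ball x η))`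
from the differential-inclusion analysis. -/
noncomputable def Hmap (g : ℝ → ℝ) (x : ℝ) : Set ℝ :=
  ⋂ η ∈ Set.Ioi (0 : ℝ), closure (convexHull ℝ (g '' {m : ℝ | |m - x| < η}))

open Set Topology

theorem subset_Icc_of_forall_pos_subset_Icc {s : Set ℝ} {a b : ℝ}
    (h : ∀ ε > 0, s ⊆ Icc (a - ε) (b + ε)) : s ⊆ Icc a b := fun y hy =>
  ⟨le_of_forall_pos_le_add fun ε hε => by linarith [(h ε hε hy).1],
    le_of_forall_pos_le_add fun ε hε => (h ε hε hy).2⟩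

theorem eventually_nhds_of_nhdsLT_of_nhdsGT {X : Type*} [TopologicalSpace X] [LinearOrder X]
    [OrderTopology X] {p : X → Prop} {x : X}
    (hlt : ∀ᶠ m in 𝓝[<] x, p m) (hgt : ∀ᶠ m in 𝓝[>] x, p m) (hx : p x) :
    ∀ᶠ m in 𝓝 x, p m := by
  rw [← nhdsNE_sup_pure, ← nhdsLT_sup_nhdsGT]
  exact ⟨⟨hlt, hgt⟩, hx⟩

section Hmap

variable {g : ℝ → ℝ} {x : ℝ}

theorem setOf_abs_sub_lt_eq_ball (x η : ℝ) : {m : ℝ | |m - x| < η} = Metric.ball x η := by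
  ext m
  rw [Metric.mem_ball, Real.dist_eq]
  rfl

theorem convex_Hmap (g : ℝ → ℝ) (x : ℝ) : Convex ℝ (Hmap g x) :=
  convex_iInter₂ fun _ _ => (convex_convexHull ℝ _).closure

theorem Hmap_subset_of_eventually_mem {K : Set ℝ} (hK : IsClosed K) (hKc : Convex ℝ K)
    (h : ∀ᶠ m in 𝓝 x, g m ∈ K) : Hmap g x ⊆ K := by
  obtain ⟨η, hη, hball⟩ := Metric.eventually_nhds_iff_ball.1 h
  have himage : g '' {m : ℝ | |m - x| < η} ⊆ K := by
    rw [setOf_abs_sub_lt_eq_ball]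
    exact image_subset_iff.2 fun m hm => hball m hm
  exact (biInter_subset_of_mem (mem_Ioi.2 hη)).trans
    (closure_minimal (convexHull_min himage hKc) hK)

theorem mem_Hmap_of_tendsto {s : Set ℝ} [(𝓝[s] x).NeBot] {a : ℝ}
    (h : Tendsto g (𝓝[s] x) (𝓝 a)) : a ∈ Hmap g x := by
  refine mem_iInter₂.2 fun η hη => closure_mono (subset_convexHull ℝ _) ?_
  refine mem_closure_of_tendsto h ?_
  rw [setOf_abs_sub_lt_eq_ball]
  filter_upwards [nhdsWithin_le_nhds (Metric.ball_mem_nhds x hη)] with m hm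
  exact mem_image_of_mem g hm

end Hmap

theorem Hmap_eq_interval_at_jump_general (g : ℝ → ℝ) (x α β : ℝ)
    (hleft : Tendsto g (nhdsWithin x (Set.Iio x)) (nhds α))
    (hright : Tendsto g (nhdsWithin x (Set.Ioi x)) (nhds β))
    (hx : g x ∈ Set.Icc (min α β) (max α β)) :
    Hmap g x = Set.Icc (min α β) (max α β) := by
  refine subset_antisymm (subset_Icc_of_forall_pos_subset_Icc fun ε hε => ?_) ?_
  · have hα : Icc (min α β - ε) (max α β + ε) ∈ 𝓝 α :=
      Icc_mem_nhds (by linarith [min_le_left α β]) (by linarith [le_max_left α β])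
    have hβ : Icc (min α β - ε) (max α β + ε) ∈ 𝓝 β :=
      Icc_mem_nhds (by linarith [min_le_right α β]) (by linarith [le_max_right α β])
    exact Hmap_subset_of_eventually_mem isClosed_Icc (convex_Icc _ _)
      (eventually_nhds_of_nhdsLT_of_nhdsGT (hleft hα) (hright hβ)
        (Icc_subset_Icc (by linarith) (by linarith) hx))
  · rw [← uIcc, ← segment_eq_uIcc]
    exact (convex_Hmap g x).segment_subset (mem_Hmap_of_tendsto hleft)
      (mem_Hmap_of_tendsto hright)

/-- At a jump point of `g` with one-sided limits `α` (from the left) and `β` (from the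
right), and with `g x` between them, `H(x)` is the interval between the one-sided
limits. -/
theorem Hmap_eq_interval_at_jump (B : ℝ) (hB : 0 ≤ B) (g : ℝ → ℝ)
    (hg : ∀ x, |g x| ≤ B) (x α β : ℝ)
    (hleft : Tendsto g (nhdsWithin x (Set.Iio x)) (nhds α))
    (hright : Tendsto g (nhdsWithin x (Set.Ioi x)) (nhds β))
    (hx : g x ∈ Set.Icc (min α β) (max α β)) :
    Hmap g x = Set.Icc (min α β) (max α β) :=
  Hmap_eq_interval_at_jump_general g x α β hleft hright hx
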